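/- arXiv:math/0312131 — 5 statements merged into one kernel-verified Lean document; each statement's English description precedes it below -/
import Mathlib

section
/- If (a_n) is a sequence of non-negative reals that P-converges to 0 for some weight matrix P, then 0 is a cluster point of the sequence (a_n), i.e., there is a subsequence of (a_n) converging to 0. -/
open Filter Topology

theorem stmt2 (P : ℕ → ℕ → ℝ) (a : ℕ → ℝ)
    (hP0 : ∀ n m, 0 ≤ P n m)
    (hPfin : ∀ n, (Function.support (P n)).Finite)
    (hPsum : ∀ n, ∑' m, P n m = 1)
    (hPcol : ∀ m, Tendsto (fun n => P n m) atTop (𝓝 0))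
    (ha0 : ∀ n, 0 ≤ a n)
    (ha : Tendsto (fun n => ∑' m, P n m * a m) atTop (𝓝 0)) :
    ∃ φ : ℕ → ℕ, StrictMono φ ∧ Tendsto (fun k => a (φ k)) atTop (𝓝 0) := by
  have key : ∀ ε > (0:ℝ), ∃ᶠ k in atTop, a k < ε := by
    intro ε hε
    by_contra h
    rw [not_frequently] at h
    simp only [not_lt, eventually_atTop] at h
    obtain ⟨N, hN⟩ := h
    have hS : ∀ n, ε * (1 - ∑ m ∈ Finset.range N, P n m) ≤ ∑' m, P n m * a m := by
      intro n
      set F := (hPfin n).toFinset with hF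
      have hS1 : ∑' m, P n m * a m = ∑ m ∈ F, P n m * a m := by
        apply tsum_eq_sum
        intro m hm
        by_contra h0
        have : P n m ≠ 0 := fun hp => h0 (by simp [hp])
        exact hm ((hPfin n).mem_toFinset.2 this)
      have hsum1 : ∑ m ∈ F, P n m = 1 := by
        rw [← hPsum n]
        exact (tsum_eq_sum fun m hm => by
          by_contra h0
          exact hm ((hPfin n).mem_toFinset.2 h0)).symm
      set G := F \ Finset.range N with hG
      have h1 : ∑ m ∈ G, P n m * a m ≤ ∑ m ∈ F, P n m * a m :=
        Finset.sum_le_sum_of_subset_of_nonneg (Finset.sdiff_subset)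
          (fun m _ _ => mul_nonneg (hP0 n m) (ha0 m))
      have h2 : ε * ∑ m ∈ G, P n m ≤ ∑ m ∈ G, P n m * a m := by
        rw [Finset.mul_sum]
        apply Finset.sum_le_sum
        intro m hm
        have hmN : N ≤ m := by
          rcases Finset.mem_sdiff.1 hm with ⟨_, hm2⟩
          simpa using hm2
        calc ε * P n m = P n m * ε := mul_comm _ _
          _ ≤ P n m * a m := mul_le_mul_of_nonneg_left (hN m hmN) (hP0 n m)
      have h3 : 1 - ∑ m ∈ Finset.range N, P n m ≤ ∑ m ∈ G, P n m := by
        have hsplit : ∑ m ∈ G, P n m = ∑ m ∈ F, P n m - ∑ m ∈ F ∩ Finset.range N, P n m := by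
          rw [hG, ← Finset.sdiff_inter_self_left,
            Finset.sum_sdiff_eq_sub Finset.inter_subset_left]
        rw [hsplit, hsum1]
        have : ∑ m ∈ F ∩ Finset.range N, P n m ≤ ∑ m ∈ Finset.range N, P n m :=
          Finset.sum_le_sum_of_subset_of_nonneg Finset.inter_subset_right
            (fun m _ _ => hP0 n m)
        linarith
      calc ε * (1 - ∑ m ∈ Finset.range N, P n m) ≤ ε * ∑ m ∈ G, P n m :=
            mul_le_mul_of_nonneg_left h3 hε.le
        _ ≤ ∑ m ∈ G, P n m * a m := h2
        _ ≤ ∑ m ∈ F, P n m * a m := h1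
        _ = ∑' m, P n m * a m := hS1.symm
    have hT : Tendsto (fun n => ∑ m ∈ Finset.range N, P n m) atTop (𝓝 0) := by
      have := tendsto_finset_sum (Finset.range N) (fun m _ => hPcol m)
      simpa using this
    have hlim : Tendsto (fun n => ε * (1 - ∑ m ∈ Finset.range N, P n m)) atTop (𝓝 ε) := by
      have : Tendsto (fun n => 1 - ∑ m ∈ Finset.range N, P n m) atTop (𝓝 1) := by
        simpa using (tendsto_const_nhds.sub hT)
      simpa using (tendsto_const_nhds.mul this)
    have : ε ≤ 0 := le_of_tendsto_of_tendsto' hlim ha hS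
    linarith
  obtain ⟨φ, hφmono, hφ⟩ := extraction_forall_of_frequently
    (fun n => key (1 / (n + 1)) (by positivity))
  refine ⟨φ, hφmono, ?_⟩
  refine tendsto_of_tendsto_of_tendsto_of_le_of_le tendsto_const_nhds
    tendsto_one_div_add_atTop_nhds_zero_nat (fun k => ha0 _) (fun k => (hφ k).le)
end

section
/- Let X be a Banach space, P a weight matrix, and 1 ≤ p < ∞. If a sequence (x_n) in X is weakly (P,p)-convergent to 0 (i.e., for every continuous linear functional f on X, the sequence |f(x_n)|^p P-converges to 0), then 0 is a weak cluster point of (x_n). -/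
/-!
If 0 were not a weak cluster point, there would be functionals `f₁, …, f_k`, `ε > 0` and `N`
with `g m := ∑ᵢ |fᵢ (x m)| ^ p ≥ ε ^ p` for all `m ≥ N`. Summing the hypothesis over `i`, the
`P`-means of `g` tend to `0`; but since the columns of `P` tend to `0` and its rows sum to `1`,
the `P`-means of a sequence that is eventually `≥ ε ^ p` have all limits `≥ ε ^ p`.
-/

open Filter Topology

/-- `x₀` is a weak cluster point of the sequence `x`: every weak neighborhood of `x₀`
(determined by finitely many continuous linear functionals and an `ε`) contains `x n`
for arbitrarily large `n`. -/
def IsWeakClusterPt {X : Type*} [NormedAddCommGroup X] [NormedSpace ℝ X]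
    (x₀ : X) (x : ℕ → X) : Prop :=
  ∀ (k : ℕ) (f : Fin k → X →L[ℝ] ℝ) (ε : ℝ), 0 < ε → ∀ N : ℕ,
    ∃ n ≥ N, ∀ i, |f i (x n) - f i x₀| < ε

structure IsWeightMatrix (P : ℕ → ℕ → ℝ) : Prop where
  nonneg : ∀ n m, 0 ≤ P n m
  finite_support : ∀ n, (Function.support (P n)).Finite
  tsum_eq_one : ∀ n, ∑' m, P n m = 1
  tendsto_zero : ∀ m, Tendsto (fun n => P n m) atTop (𝓝 0)

namespace IsWeightMatrix

variable {P : ℕ → ℕ → ℝ}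

theorem summable_mul (hP : IsWeightMatrix P) (n : ℕ) (g : ℕ → ℝ) :
    Summable fun m => P n m * g m :=
  summable_of_ne_finset_zero (s := (hP.finite_support n).toFinset) fun m hm => by
    simp [Function.notMem_support.mp (by simpa using hm)]

theorem summable (hP : IsWeightMatrix P) (n : ℕ) : Summable (P n) := by
  simpa using hP.summable_mul n 1

theorem sum_range_add_mul_le_tsum (hP : IsWeightMatrix P) (n : ℕ) {g : ℕ → ℝ} {c : ℝ} {N : ℕ}
    (hg : ∀ m, N ≤ m → c ≤ g m) :
    ∑ m ∈ Finset.range N, P n m * g m + c * (1 - ∑ m ∈ Finset.range N, P n m) ≤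
      ∑' m, P n m * g m := by
  have htail : ∑' m, P n (m + N) = 1 - ∑ m ∈ Finset.range N, P n m := by
    rw [← hP.tsum_eq_one n, ← (hP.summable n).sum_add_tsum_nat_add N, add_sub_cancel_left]
  rw [← (hP.summable_mul n g).sum_add_tsum_nat_add N, ← htail, ← tsum_mul_left]
  refine add_le_add_right (Summable.tsum_le_tsum (fun m => ?_)
    (((summable_nat_add_iff N).mpr (hP.summable n)).mul_left c)
    ((summable_nat_add_iff N).mpr (hP.summable_mul n g))) _
  rw [mul_comm]
  exact mul_le_mul_of_nonneg_left (hg _ (Nat.le_add_left N m)) (hP.nonneg n _)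

theorem le_of_tendsto (hP : IsWeightMatrix P) {g : ℕ → ℝ} {c L : ℝ}
    (hlim : Tendsto (fun n => ∑' m, P n m * g m) atTop (𝓝 L)) (hg : ∀ᶠ m in atTop, c ≤ g m) :
    c ≤ L := by
  obtain ⟨N, hN⟩ := eventually_atTop.mp hg
  have hhead : ∀ h : ℕ → ℝ,
      Tendsto (fun n => ∑ m ∈ Finset.range N, P n m * h m) atTop (𝓝 0) := fun h => by
    simpa using tendsto_finsetSum _ fun m _ => (hP.tendsto_zero m).mul_const (h m)
  have hbound : Tendsto (fun n => ∑ m ∈ Finset.range N, P n m * g m +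
      c * (1 - ∑ m ∈ Finset.range N, P n m)) atTop (𝓝 (0 + c * (1 - 0))) :=
    (hhead g).add ((tendsto_const_nhds.sub (by simpa using hhead 1)).const_mul c)
  simpa using le_of_tendsto_of_tendsto' hbound hlim fun n => hP.sum_range_add_mul_le_tsum n hN

end IsWeightMatrix

theorem stmt3_general {X : Type*} [NormedAddCommGroup X] [NormedSpace ℝ X]
    (P : ℕ → ℕ → ℝ) (x : ℕ → X) (p : ℝ) (hp : 1 ≤ p)
    (hP0 : ∀ n m, 0 ≤ P n m)
    (hPfin : ∀ n, (Function.support (P n)).Finite)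
    (hPsum : ∀ n, ∑' m, P n m = 1)
    (hPcol : ∀ m, Tendsto (fun n => P n m) atTop (𝓝 0))
    (hconv : ∀ f : X →L[ℝ] ℝ,
      Tendsto (fun n => ∑' m, P n m * |f (x m)| ^ p) atTop (𝓝 0)) :
    IsWeakClusterPt 0 x := by
  have hP : IsWeightMatrix P := ⟨hP0, hPfin, hPsum, hPcol⟩
  intro k f ε hε N
  by_contra! hfar
  set g : ℕ → ℝ := fun m => ∑ i, |f i (x m)| ^ p
  have hg : Tendsto (fun n => ∑' m, P n m * g m) atTop (𝓝 0) := by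
    have hsplit : (fun n => ∑' m, P n m * g m) = fun n => ∑ i, ∑' m, P n m * |f i (x m)| ^ p :=
      funext fun n => by
        simp only [g, Finset.mul_sum]
        exact Summable.tsum_finsetSum fun i _ => hP.summable_mul n _
    simpa [hsplit] using tendsto_finsetSum Finset.univ fun i _ => hconv (f i)
  have hg_ge : ∀ᶠ m in atTop, ε ^ p ≤ g m := eventually_atTop.mpr ⟨N, fun m hm => by
    obtain ⟨i, hi⟩ := hfar m hm
    calc ε ^ p ≤ |f i (x m)| ^ p := by
          gcongr
          simpa using hi
      _ ≤ g m := Finset.single_le_sum (f := fun j => |f j (x m)| ^ p)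
          (fun j _ => by positivity) (Finset.mem_univ i)⟩
  exact (Real.rpow_pos_of_pos hε p).not_ge (hP.le_of_tendsto hg hg_ge)

theorem stmt3 {X : Type*} [NormedAddCommGroup X] [NormedSpace ℝ X] [CompleteSpace X]
    (P : ℕ → ℕ → ℝ) (x : ℕ → X) (p : ℝ) (hp : 1 ≤ p)
    (hP0 : ∀ n m, 0 ≤ P n m)
    (hPfin : ∀ n, (Function.support (P n)).Finite)
    (hPsum : ∀ n, ∑' m, P n m = 1)
    (hPcol : ∀ m, Tendsto (fun n => P n m) atTop (𝓝 0))
    (hconv : ∀ f : X →L[ℝ] ℝ,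
      Tendsto (fun n => ∑' m, P n m * |f (x m)| ^ p) atTop (𝓝 0)) :
    IsWeakClusterPt 0 x :=
  stmt3_general P x p hp hP0 hPfin hPsum hPcol hconv
end

section
/- Let H be an infinite-dimensional Hilbert space with orthonormal sequence (e_n), and let (a_n) be positive reals with Σ a_n^{-2} = ∞. Define the weight matrix p_{n,m} = a_m^{-2} / Σ_{j=1}^n a_j^{-2} for m ≤ n and p_{n,m} = 0 for m > n. Then the sequence x_n = a_n e_n is weakly (P,2)-convergent to 0: for every f ∈ H, lim_{n→∞} Σ_{m=1}^n p_{n,m} |⟨x_m, f⟩|² = 0. -/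
/-!
The weight `a_m⁻² / S_n` undoes the factor `a_m²` in `|⟨a_m e_m, f⟩|²`, so the weighted
sum is at most `(Σ_{m ≤ n} |⟨e_m, f⟩|²) / S_n ≤ ‖f‖² / S_n` by Bessel's inequality, while
`S_n = Σ_{j ≤ n} a_j⁻² → ∞`.
-/

open Filter Topology

theorem tendsto_sum_div_sum_mul_of_not_summable {w c : ℕ → ℝ} (hw : ∀ m, 0 ≤ w m)
    (hc : ∀ m, 0 ≤ c m) (hdiv : ¬ Summable w) {B : ℝ}
    (hB : ∀ n, ∑ m ∈ Finset.range n, w m * c m ≤ B) :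
    Tendsto (fun n => ∑ m ∈ Finset.range n, (w m / ∑ j ∈ Finset.range n, w j) * c m)
      atTop (𝓝 0) := by
  have hW : Tendsto (fun n => ∑ j ∈ Finset.range n, w j) atTop atTop :=
    (not_summable_iff_tendsto_nat_atTop_of_nonneg hw).1 hdiv
  refine squeeze_zero (fun n => ?_) (fun n => ?_) ((tendsto_const_nhds (x := B)).div_atTop hW)
  · exact Finset.sum_nonneg fun m _ =>
      mul_nonneg (div_nonneg (hw m) (Finset.sum_nonneg fun j _ => hw j)) (hc m)
  · simp_rw [div_mul_eq_mul_div, ← Finset.sum_div]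
    exact div_le_div_of_nonneg_right (hB n) (Finset.sum_nonneg fun j _ => hw j)

theorem inv_sq_mul_norm_inner_ofReal_smul_sq_le {𝕜 H : Type*} [RCLike 𝕜]
    [NormedAddCommGroup H] [InnerProductSpace 𝕜 H] (r : ℝ) (x y : H) :
    (r ^ 2)⁻¹ * ‖(inner 𝕜 ((r : 𝕜) • x) y : 𝕜)‖ ^ 2 ≤ ‖(inner 𝕜 x y : 𝕜)‖ ^ 2 := by
  rw [inner_smul_left, norm_mul, RCLike.norm_conj, RCLike.norm_ofReal, mul_pow, sq_abs]
  rcases eq_or_ne r 0 with rfl | hr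
  · simp
  · rw [inv_mul_cancel_left₀ (pow_ne_zero 2 hr)]

theorem stmt5_general {𝕜 H : Type*} [RCLike 𝕜] [NormedAddCommGroup H] [InnerProductSpace 𝕜 H]
    (e : ℕ → H) (he : Orthonormal 𝕜 e)
    (a : ℕ → ℝ)
    (hdiv : ¬ Summable (fun n => (a n ^ 2)⁻¹)) :
    ∀ f : H, Tendsto (fun n =>
        ∑ m ∈ Finset.range (n + 1),
          ((a m ^ 2)⁻¹ / ∑ j ∈ Finset.range (n + 1), (a j ^ 2)⁻¹) *
            ‖(inner 𝕜 ((a m : 𝕜) • e m) f : 𝕜)‖ ^ 2)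
      atTop (𝓝 0) := by
  intro f
  have hbessel : ∀ n, ∑ m ∈ Finset.range n,
      (a m ^ 2)⁻¹ * ‖(inner 𝕜 ((a m : 𝕜) • e m) f : 𝕜)‖ ^ 2 ≤ ‖f‖ ^ 2 := fun n =>
    calc _ ≤ ∑ m ∈ Finset.range n, ‖(inner 𝕜 (e m) f : 𝕜)‖ ^ 2 :=
          Finset.sum_le_sum fun m _ => inv_sq_mul_norm_inner_ofReal_smul_sq_le (a m) (e m) f
      _ ≤ ‖f‖ ^ 2 := he.sum_inner_products_le f
  exact (tendsto_sum_div_sum_mul_of_not_summable (fun m => by positivity)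
    (fun m => by positivity) hdiv hbessel).comp (tendsto_add_atTop_nat 1)

theorem stmt5 {𝕜 H : Type*} [RCLike 𝕜] [NormedAddCommGroup H] [InnerProductSpace 𝕜 H]
    (e : ℕ → H) (he : Orthonormal 𝕜 e)
    (a : ℕ → ℝ) (ha : ∀ n, 0 < a n)
    (hdiv : ¬ Summable (fun n => (a n ^ 2)⁻¹)) :
    ∀ f : H, Tendsto (fun n =>
        ∑ m ∈ Finset.range (n + 1),
          ((a m ^ 2)⁻¹ / ∑ j ∈ Finset.range (n + 1), (a j ^ 2)⁻¹) *
            ‖(inner 𝕜 ((a m : 𝕜) • e m) f : 𝕜)‖ ^ 2)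
      atTop (𝓝 0) :=
  stmt5_general e he a hdiv
end

section
/- There exists a real Hilbert space H₁ and a sequence of orthogonal cylinders C_n in H₁, each having as base a 3-dimensional ball of radius r_n, such that ⋃_n C_n = H₁ but Σ_{n=1}^∞ r_n³ < ∞. Concretely: take (x_n) in a Hilbert space H with ‖x_n‖ = a_n, Σ a_n^{-3} < ∞, and 0 a weak cluster point of (x_n); set H₁ = H ⊕ H ⊕ H and C_n = {(h₁,h₂,h₃) : Σ_{j=1}^3 |⟨h_j, x_n⟩|² ≤ 1}. Then the C_n cover H₁. -/
open Filter Topology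

/-!
Take an orthonormal sequence `e n` and `x n = √(n + 1) • e n`, so that
`∑ ‖x n‖⁻³ = ∑ (n + 1)^(-3/2)` converges. For finitely many vectors `g i`, Bessel's inequality
makes `∑ₙ ∑ᵢ ⟪g i, e n⟫²` finite, while `∑ 1 / (n + 1)` diverges; hence
`∑ᵢ ⟪g i, x n⟫² = (n + 1) ∑ᵢ ⟪g i, e n⟫² < δ` for infinitely many `n`.
Through the Riesz representation this says that `0` is a weak cluster point of `x`, and with
`δ = 1` it puts every `(h₁, h₂, h₃)` into one of the cylinders.
-/

open scoped InnerProductSpace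

theorem exists_orthonormal_nat {𝕜 E : Type*} [RCLike 𝕜] [NormedAddCommGroup E]
    [InnerProductSpace 𝕜 E] (h : ¬ FiniteDimensional 𝕜 E) : ∃ e : ℕ → E, Orthonormal 𝕜 e := by
  let b := Module.Basis.ofVectorSpace 𝕜 E
  have : Infinite (Module.Basis.ofVectorSpaceIndex 𝕜 E) :=
    not_finite_iff_infinite.mp fun _ => h (Module.Finite.of_basis b)
  exact ⟨_, InnerProductSpace.gramSchmidtNormed_orthonormal
    (b.linearIndependent.comp _ (Infinite.natEmbedding _).injective)⟩

theorem Summable.frequently_lt_mul {c w : ℕ → ℝ} (hc : Summable c) (hw : ¬ Summable w)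
    (hw₀ : ∀ n, 0 ≤ w n) {ε : ℝ} (hε : 0 < ε) : ∃ᶠ n in atTop, c n < ε * w n := by
  refine fun hev => hw ?_
  refine (hc.div_const ε).of_norm_bounded_eventually_nat ?_
  filter_upwards [hev] with n hn
  rw [Real.norm_of_nonneg (hw₀ n), le_div_iff₀' hε]
  exact not_lt.mp hn

section

variable {H : Type*} [NormedAddCommGroup H] [InnerProductSpace ℝ H]

theorem Orthonormal.summable_sum_inner_sq {e : ℕ → H} (he : Orthonormal ℝ e) {ι : Type*}
    [Fintype ι] (g : ι → H) : Summable fun n => ∑ i, ⟪g i, e n⟫_ℝ ^ 2 := by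
  refine summable_sum fun i _ => ?_
  simpa only [Real.norm_eq_abs, sq_abs, real_inner_comm] using he.inner_products_summable (g i)

theorem Orthonormal.frequently_sum_inner_smul_sq_lt {e : ℕ → H} (he : Orthonormal ℝ e)
    {a : ℕ → ℝ} (ha : ¬ Summable fun n => (a n ^ 2)⁻¹) {ι : Type*} [Fintype ι] (g : ι → H)
    {δ : ℝ} (hδ : 0 < δ) : ∃ᶠ n in atTop, ∑ i, ⟪g i, a n • e n⟫_ℝ ^ 2 < δ := by
  refine ((he.summable_sum_inner_sq g).frequently_lt_mul ha (fun n => by positivity) hδ).mono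
    fun n hn => ?_
  simp only [real_inner_smul_right, mul_pow, ← Finset.mul_sum]
  rcases eq_or_ne (a n) 0 with ha0 | ha0
  · simpa [ha0] using hδ
  calc a n ^ 2 * ∑ i, ⟪g i, e n⟫_ℝ ^ 2 < a n ^ 2 * (δ * (a n ^ 2)⁻¹) := by gcongr
    _ = δ := by field_simp

theorem Orthonormal.isWeakClusterPt_zero_smul [CompleteSpace H] {e : ℕ → H}
    (he : Orthonormal ℝ e) {a : ℕ → ℝ} (ha : ¬ Summable fun n => (a n ^ 2)⁻¹) :
    IsWeakClusterPt 0 fun n => a n • e n := by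
  intro k f ε hε N
  let g i := (InnerProductSpace.toDual ℝ H).symm (f i)
  obtain ⟨n, hnN, hn⟩ :=
    frequently_atTop.mp (he.frequently_sum_inner_smul_sq_lt ha g (pow_pos hε 2)) N
  refine ⟨n, hnN, fun i => ?_⟩
  rw [map_zero, sub_zero, ← InnerProductSpace.toDual_symm_apply,
    ← sq_lt_sq₀ (abs_nonneg _) hε.le, sq_abs]
  exact (Finset.single_le_sum (fun j _ => sq_nonneg ⟪g j, a n • e n⟫_ℝ)
    (Finset.mem_univ i)).trans_lt hn

end

theorem summable_inv_sqrt_succ_pow_three :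
    Summable fun n : ℕ => (√((n : ℝ) + 1))⁻¹ ^ 3 := by
  have h := (summable_nat_add_iff 1).mpr (Real.summable_nat_rpow_inv.mpr
    (show (1 : ℝ) < 3 / 2 by norm_num))
  refine h.congr fun n => ?_
  push_cast
  rw [inv_pow, ← Real.rpow_natCast, Real.sqrt_eq_rpow, ← Real.rpow_mul (by positivity)]
  norm_num

theorem not_summable_inv_sq_sqrt_succ :
    ¬ Summable fun n : ℕ => (√((n : ℝ) + 1) ^ 2)⁻¹ := by
  simp_rw [Real.sq_sqrt (Nat.cast_add_one_pos _).le]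
  exact_mod_cast (summable_nat_add_iff 1).not.mpr Real.not_summable_natCast_inv

/-- In `H₁ = H ⊕ H ⊕ H` there is a sequence of orthogonal cylinders with
3-dimensional ball bases of radii `r n = ‖x n‖⁻¹`, `∑ r n ^ 3 < ∞`,
covering all of `H₁`: every `h = (h₁, h₂, h₃)` lies in some cylinder
`C n = {h : ∑_{j} ⟪h_j, x n⟫² ≤ 1}`. -/
theorem stmt8 {H : Type*} [NormedAddCommGroup H] [InnerProductSpace ℝ H]
    [CompleteSpace H] (hinf : ¬ FiniteDimensional ℝ H) :
    ∃ x : ℕ → H, (∀ n, x n ≠ 0) ∧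
      Summable (fun n => (‖x n‖⁻¹) ^ 3) ∧
      IsWeakClusterPt 0 x ∧
      ∀ h : H × H × H, ∃ n,
        (inner ℝ h.1 (x n) : ℝ) ^ 2 + (inner ℝ h.2.1 (x n) : ℝ) ^ 2 +
          (inner ℝ h.2.2 (x n) : ℝ) ^ 2 ≤ 1 := by
  obtain ⟨e, he⟩ := exists_orthonormal_nat (𝕜 := ℝ) hinf
  have hnorm : ∀ n : ℕ, ‖√((n : ℝ) + 1) • e n‖ = √((n : ℝ) + 1) := fun n => by
    rw [norm_smul, he.1 n, mul_one, Real.norm_of_nonneg (Real.sqrt_nonneg _)]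
  refine ⟨fun n => √((n : ℝ) + 1) • e n, fun n => ?_, ?_,
    he.isWeakClusterPt_zero_smul not_summable_inv_sq_sqrt_succ, fun h => ?_⟩
  · rw [← norm_pos_iff, hnorm]
    positivity
  · simpa only [hnorm] using summable_inv_sqrt_succ_pow_three
  · obtain ⟨n, hn⟩ := (he.frequently_sum_inner_smul_sq_lt not_summable_inv_sq_sqrt_succ
      ![h.1, h.2.1, h.2.2] one_pos).exists
    exact ⟨n, by simpa [Fin.sum_univ_three] using hn.le⟩
end

section
/- Let X be a Banach space of M-cotype p (2 ≤ p ≤ ∞) with dual exponent p′, and let (x_n) be a sequence in X that is weakly (P,p′)-convergent to 0 for some weight matrix P. Then Σ_{n=1}^∞ ‖x_n‖^{-p′} = ∞. -/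
/-
Uniform boundedness turns the weak (P,p′)-nullity of `x` into a norm bound on all signed
averages `∑ ±P n m • x m`, and M-cotype turns that into a uniform bound
`‖(P n m * ‖x m‖)ₘ‖_p ≤ C` on the rows. Hölder's inequality then gives
`∑ m ∈ G, P n m ≤ C * (∑ m ∈ G, ‖x m‖ ^ (-p')) ^ (1 / p')` for every part `G` of a row. If the
series `∑ ‖x m‖ ^ (-p')` converged, its tails would be small, and a row carrying little mass on a
finite head (the columns tend to `0`) would have total mass below `1`.
-/

open Filter Topology

/-- `X` has M-cotype `p` (for `2 ≤ p ≤ ∞`): there is `C > 0` such that for every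
finite collection of vectors there is a choice of signs with
`‖∑ γ k • y k‖ ≥ C * (∑ ‖y k‖ ^ p) ^ (1/p)` (the right-hand `ℓ_p` expression
being encoded via the `PiLp p` norm, which also covers `p = ∞`). -/
def HasMCotype (p : ENNReal) (X : Type*) [NormedAddCommGroup X]
    [NormedSpace ℝ X] : Prop :=
  ∃ C : ℝ, 0 < C ∧ ∀ (n : ℕ) (y : Fin n → X), ∃ γ : Fin n → ℝ,
    (∀ k, γ k = 1 ∨ γ k = -1) ∧
    C * ‖(WithLp.equiv p (Fin n → ℝ)).symm (fun k => ‖y k‖)‖ ≤ ‖∑ k, γ k • y k‖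

open scoped ENNReal

theorem exists_norm_le_of_forall_exists_norm_apply_le {𝕜 E ι : Type*} [RCLike 𝕜]
    [NormedAddCommGroup E] [NormedSpace 𝕜 E] {v : ι → E}
    (h : ∀ f : StrongDual 𝕜 E, ∃ C, ∀ i, ‖f (v i)‖ ≤ C) : ∃ C, ∀ i, ‖v i‖ ≤ C := by
  obtain ⟨C, hC⟩ := banach_steinhaus (g := fun i => NormedSpace.inclusionInDoubleDual 𝕜 E (v i)) h
  exact ⟨C, fun i => (NormedSpace.inclusionInDoubleDualLi 𝕜).norm_map (v i) ▸ hC i⟩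

theorem HasMCotype.exists_signs {p : ℝ≥0∞} [Fact (1 ≤ p)] {X : Type*} [NormedAddCommGroup X]
    [NormedSpace ℝ X] (h : HasMCotype p X) :
    ∃ C > 0, ∀ (ι : Type*) [Fintype ι] (y : ι → X), ∃ γ : ι → ℝ, (∀ k, |γ k| = 1) ∧
      C * ‖WithLp.toLp p (fun k => ‖y k‖)‖ ≤ ‖∑ k, γ k • y k‖ := by
  obtain ⟨C, hC0, hC⟩ := h
  refine ⟨C, hC0, fun ι _ y => ?_⟩
  let e := Fintype.equivFin ι
  obtain ⟨γ, hγ, hle⟩ := hC _ (y ∘ e.symm)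
  refine ⟨γ ∘ e, fun k => (abs_eq zero_le_one).mpr (hγ (e k)), ?_⟩
  have hsum : ∑ k, (γ ∘ e) k • y k = ∑ j, γ j • (y ∘ e.symm) j := by
    simpa using (e.symm.sum_comp fun k => γ (e k) • y k).symm
  rwa [hsum, ← (LinearIsometryEquiv.piLpCongrLeft p ℝ ℝ e).norm_map
    (WithLp.toLp p fun k => ‖y k‖)]

theorem Set.Finite.tsum_mul_eq_sum {ι : Type*} {f : ι → ℝ} (hf : (Function.support f).Finite)
    (g : ι → ℝ) : ∑' i, f i * g i = ∑ i ∈ hf.toFinset, f i * g i :=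
  tsum_eq_sum' ((Function.support_mul_subset_left f g).trans (by simp))

theorem sum_mul_le_one_add_sum_mul_rpow {ι : Type*} (s : Finset ι) {w c : ι → ℝ} {q : ℝ}
    (hq : 1 ≤ q) (hw : ∀ i, 0 ≤ w i) (hw1 : ∑ i ∈ s, w i = 1) (hc : ∀ i, 0 ≤ c i) :
    ∑ i ∈ s, w i * c i ≤ 1 + ∑ i ∈ s, w i * c i ^ q := by
  have hpt (i : ι) : c i ≤ 1 + c i ^ q := by
    rcases le_total (c i) 1 with h | h
    · linarith [Real.rpow_nonneg (hc i) q]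
    · linarith [Real.self_le_rpow_of_one_le h hq]
  calc ∑ i ∈ s, w i * c i ≤ ∑ i ∈ s, w i * (1 + c i ^ q) :=
        Finset.sum_le_sum fun i _ => mul_le_mul_of_nonneg_left (hpt i) (hw i)
    _ = 1 + ∑ i ∈ s, w i * c i ^ q := by
        simp only [mul_add, mul_one, Finset.sum_add_distrib, hw1]

theorem bddAbove_range_sum_mul_of_rpow {κ ι : Type*} {w : κ → ι → ℝ} {S : κ → Finset ι}
    {c : ι → ℝ} {q : ℝ} (hq : 1 ≤ q) (hw : ∀ n i, 0 ≤ w n i) (hrow : ∀ n, ∑ i ∈ S n, w n i = 1)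
    (hc : ∀ i, 0 ≤ c i) (h : BddAbove (Set.range fun n => ∑ i ∈ S n, w n i * c i ^ q)) :
    BddAbove (Set.range fun n => ∑ i ∈ S n, w n i * c i) := by
  obtain ⟨B, hB⟩ := h
  refine ⟨1 + B, Set.forall_mem_range.mpr fun n => ?_⟩
  exact (sum_mul_le_one_add_sum_mul_rpow _ hq (hw n) (hrow n) hc).trans
    (add_le_add_right (hB ⟨n, rfl⟩) 1)

theorem ENNReal.eq_top_and_eq_one_or_holderConjugate {p : ℝ≥0∞} {q : ℝ} (hp : 1 < p)
    (hpq : 1 / p.toReal + 1 / q = 1) : p = ⊤ ∧ q = 1 ∨ p.toReal.HolderConjugate q := by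
  rcases eq_or_ne p ⊤ with rfl | hp_top
  · exact .inl ⟨rfl, by simpa using hpq⟩
  · refine .inr (Real.holderConjugate_iff.mpr ⟨?_, by simpa [one_div] using hpq⟩)
    simpa using ENNReal.toReal_strict_mono hp_top hp

theorem sum_mul_le_norm_toLp_mul_rpow {ι : Type*} {p : ℝ≥0∞} {q : ℝ} (hp : 1 < p)
    (hpq : 1 / p.toReal + 1 / q = 1) (s : Finset ι) {a b : ι → ℝ} (ha : ∀ i, 0 ≤ a i)
    (hb : ∀ i, 0 ≤ b i) {G : Finset ι} (hG : G ⊆ s) :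
    ∑ i ∈ G, a i * b i ≤ ‖WithLp.toLp p (fun i : s => a i)‖ * (∑ i ∈ G, b i ^ q) ^ (1 / q) := by
  rcases ENNReal.eq_top_and_eq_one_or_holderConjugate hp hpq with ⟨rfl, rfl⟩ | hpq'
  · simp only [Real.rpow_one, div_one, Finset.mul_sum]
    refine Finset.sum_le_sum fun i hi => mul_le_mul_of_nonneg_right ?_ (hb i)
    exact (le_abs_self _).trans (PiLp.norm_apply_le (WithLp.toLp ⊤ fun i : s => a i) ⟨i, hG hi⟩)
  refine (Real.inner_le_Lp_mul_Lq_of_nonneg G hpq' (fun i _ => ha i) (fun i _ => hb i)).trans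
    (mul_le_mul_of_nonneg_right ?_
      (Real.rpow_nonneg (Finset.sum_nonneg fun i _ => Real.rpow_nonneg (hb i) _) _))
  rw [PiLp.norm_eq_sum hpq'.pos]
  simp only [Real.norm_eq_abs, abs_of_nonneg (ha _)]
  rw [Finset.sum_coe_sort s fun i => a i ^ p.toReal]
  have hpow_nonneg (i : ι) : 0 ≤ a i ^ p.toReal := Real.rpow_nonneg (ha i) _
  exact Real.rpow_le_rpow (Finset.sum_nonneg fun i _ => hpow_nonneg i)
    (Finset.sum_le_sum_of_subset_of_nonneg hG fun i _ _ => hpow_nonneg i) (by positivity)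

theorem HasMCotype.exists_norm_toLp_le {p : ℝ≥0∞} [Fact (1 ≤ p)] {X : Type*}
    [NormedAddCommGroup X] [NormedSpace ℝ X] (hcot : HasMCotype p X) {κ ι : Type*}
    {P : κ → ι → ℝ} {S : κ → Finset ι} {x : ι → X} (hP0 : ∀ n m, 0 ≤ P n m)
    (hbdd : ∀ f : X →L[ℝ] ℝ, BddAbove (Set.range fun n => ∑ m ∈ S n, P n m * |f (x m)|)) :
    ∃ C, ∀ n, ‖WithLp.toLp p (fun m : S n => P n m * ‖x m‖)‖ ≤ C := by
  obtain ⟨c, hc0, hc⟩ := hcot.exists_signs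
  choose γ hγ hγle using fun n => hc (S n) fun m => P n m • x m
  obtain ⟨B, hB⟩ := exists_norm_le_of_forall_exists_norm_apply_le
    (v := fun n => ∑ m : S n, γ n m • P n m • x m) fun f => by
      obtain ⟨B, hB⟩ := hbdd f
      refine ⟨B, fun n => ?_⟩
      calc ‖f (∑ m : S n, γ n m • P n m • x m)‖
          ≤ ∑ m : S n, ‖f (γ n m • P n m • x m)‖ := by
            rw [map_sum]; exact norm_sum_le _ _
        _ = ∑ m ∈ S n, P n m * |f (x m)| := by
            rw [← Finset.sum_coe_sort (S n)]
            simp [hγ, abs_of_nonneg (hP0 _ _)]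
        _ ≤ B := hB ⟨n, rfl⟩
  refine ⟨B / c, fun n => (le_div_iff₀' hc0).mpr ?_⟩
  simpa [norm_smul, abs_of_nonneg (hP0 _ _)] using (hγle n).trans (hB n)

theorem not_summable_of_sum_le_mul_rpow {κ ι : Type*} {l : Filter κ} [l.NeBot]
    {P : κ → ι → ℝ} {S : κ → Finset ι} {a : ι → ℝ} {C q : ℝ} (hq : 0 < q) (hC : 0 ≤ C)
    (hP0 : ∀ n m, 0 ≤ P n m) (hrow : ∀ n, ∑ m ∈ S n, P n m = 1)
    (hcol : ∀ m, Tendsto (fun n => P n m) l (𝓝 0)) (ha : ∀ m, 0 ≤ a m)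
    (hle : ∀ n, ∀ G ⊆ S n, ∑ m ∈ G, P n m ≤ C * (∑ m ∈ G, a m) ^ (1 / q)) :
    ¬ Summable a := by
  classical
  intro hsum
  obtain ⟨ε, hεC, hε0⟩ : ∃ ε, C * ε ^ (1 / q) < 1 / 2 ∧ 0 < ε := by
    have hcont : ContinuousAt (fun ε : ℝ => C * ε ^ (1 / q)) 0 :=
      (Real.continuousAt_rpow_const 0 _ (Or.inr (by positivity))).const_mul C
    have hlim : Tendsto (fun ε : ℝ => C * ε ^ (1 / q)) (𝓝[>] 0) (𝓝 0) := by
      have := hcont.tendsto.mono_left (nhdsWithin_le_nhds (s := Set.Ioi 0))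
      rwa [Real.zero_rpow (by positivity), mul_zero] at this
    exact ((hlim.eventually (gt_mem_nhds one_half_pos)).and self_mem_nhdsWithin).exists
  obtain ⟨s, hs⟩ := hsum.vanishing (Iio_mem_nhds hε0)
  obtain ⟨n, hn⟩ := ((tendsto_finsetSum s fun m _ => hcol m).eventually
    (gt_mem_nhds (by simpa using one_half_pos))).exists
  have htail : C * (∑ m ∈ S n \ s, a m) ^ (1 / q) ≤ C * ε ^ (1 / q) :=
    mul_le_mul_of_nonneg_left (Real.rpow_le_rpow (Finset.sum_nonneg fun m _ => ha m)
      (hs _ Finset.sdiff_disjoint).le (by positivity)) hC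
  have hhead : ∑ m ∈ S n ∩ s, P n m ≤ ∑ m ∈ s, P n m :=
    Finset.sum_le_sum_of_subset_of_nonneg Finset.inter_subset_right fun m _ _ => hP0 n m
  have : (1 : ℝ) < 1 := calc
    1 = ∑ m ∈ S n ∩ s, P n m + ∑ m ∈ S n \ s, P n m := by
      rw [Finset.sum_inter_add_sum_sdiff, hrow]
    _ ≤ ∑ m ∈ s, P n m + C * ε ^ (1 / q) :=
      add_le_add hhead ((hle n _ Finset.sdiff_subset).trans htail)
    _ < 1 / 2 + 1 / 2 := add_lt_add hn hεC
    _ = 1 := by norm_num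
  exact lt_irrefl _ this

theorem stmt12_general {X : Type*} [NormedAddCommGroup X] [NormedSpace ℝ X]
    (p : ENNReal) (hp : 2 ≤ p) (p' : ℝ)
    (hconj : 1 / p.toReal + 1 / p' = 1)
    (hcot : HasMCotype p X)
    (x : ℕ → X) (hx0 : ∀ n, x n ≠ 0)
    (P : ℕ → ℕ → ℝ)
    (hP0 : ∀ n m, 0 ≤ P n m)
    (hPfin : ∀ n, (Function.support (P n)).Finite)
    (hPsum : ∀ n, ∑' m, P n m = 1)
    (hPcol : ∀ m, Tendsto (fun n => P n m) atTop (𝓝 0))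
    (hconv : ∀ f : X →L[ℝ] ℝ,
      Tendsto (fun n => ∑' m, P n m * |f (x m)| ^ p') atTop (𝓝 0)) :
    ¬ Summable (fun n => ‖x n‖ ^ (-p')) := by
  have hp1 : 1 < p := ENNReal.one_lt_two.trans_le hp
  have : Fact (1 ≤ p) := ⟨hp1.le⟩
  have hp' : 1 ≤ p' := by
    rcases ENNReal.eq_top_and_eq_one_or_holderConjugate hp1 hconj with ⟨-, rfl⟩ | h
    exacts [le_rfl, h.symm.lt.le]
  let S n := (hPfin n).toFinset
  have hrow (n : ℕ) : ∑ m ∈ S n, P n m = 1 := by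
    simpa [hPsum n] using ((hPfin n).tsum_mul_eq_sum 1).symm
  obtain ⟨C, hC⟩ := hcot.exists_norm_toLp_le (S := S) (x := x) hP0 fun f => by
    refine bddAbove_range_sum_mul_of_rpow hp' hP0 hrow (fun m => abs_nonneg _) ?_
    simpa only [fun n => (hPfin n).tsum_mul_eq_sum] using (hconv f).bddAbove_range
  refine not_summable_of_sum_le_mul_rpow (by linarith) ((norm_nonneg _).trans (hC 0)) hP0 hrow
    hPcol (fun m => by positivity) fun n G hG => ?_
  have hx (m : ℕ) : 0 < ‖x m‖ := norm_pos_iff.mpr (hx0 m)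
  calc ∑ m ∈ G, P n m = ∑ m ∈ G, P n m * ‖x m‖ * ‖x m‖⁻¹ := by
        congr! 1 with m; field_simp [(hx m).ne']
    _ ≤ ‖WithLp.toLp p (fun m : S n => P n m * ‖x m‖)‖ * (∑ m ∈ G, ‖x m‖⁻¹ ^ p') ^ (1 / p') :=
        sum_mul_le_norm_toLp_mul_rpow hp1 hconj (S n) (fun m => mul_nonneg (hP0 n m) (hx m).le)
          (fun m => (inv_pos.mpr (hx m)).le) hG
    _ ≤ C * (∑ m ∈ G, ‖x m‖ ^ (-p')) ^ (1 / p') := by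
        simp only [Real.inv_rpow (norm_nonneg _), ← Real.rpow_neg (norm_nonneg _)]
        gcongr
        exact hC n

theorem stmt12 {X : Type*} [NormedAddCommGroup X] [NormedSpace ℝ X] [CompleteSpace X]
    (p : ENNReal) (hp : 2 ≤ p) (p' : ℝ)
    (hconj : 1 / p.toReal + 1 / p' = 1)
    (hcot : HasMCotype p X)
    (x : ℕ → X) (hx0 : ∀ n, x n ≠ 0)
    (P : ℕ → ℕ → ℝ)
    (hP0 : ∀ n m, 0 ≤ P n m)
    (hPfin : ∀ n, (Function.support (P n)).Finite)
    (hPsum : ∀ n, ∑' m, P n m = 1)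
    (hPcol : ∀ m, Tendsto (fun n => P n m) atTop (𝓝 0))
    (hconv : ∀ f : X →L[ℝ] ℝ,
      Tendsto (fun n => ∑' m, P n m * |f (x m)| ^ p') atTop (𝓝 0)) :
    ¬ Summable (fun n => ‖x n‖ ^ (-p')) :=
  stmt12_general p hp p' hconj hcot x hx0 P hP0 hPfin hPsum hPcol hconv
end
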